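/- Let N be a single-qubit quantum channel, D_s a unitary 1-design on 2×2 unitary matrices, and χ ∈ (0,1] such that for every nonempty A ⊆ {1,…,n} and every Hermitian O_A that is a real linear combination of Pauli strings with support exactly A: E_{W∼D_s^{⊗n}} ‖N^{†⊗n}(W† O_A W)‖_F² ≤ χ^{2|A|} ‖O_A‖_F². Set p := 1−χ and let Ñ_p be the linear map on 2×2 matrices whose Hilbert–Schmidt adjoint satisfies Ñ_p†(I) = I and Ñ_p†(P) = N†(P)/(1−p) for P ∈ {X,Y,Z}. Then for every Hermitian 2^n×2^n matrix O: E_{V∼D_s^{⊗n}} ‖Ñ_p^{†⊗n}(V† O V)‖_F² ≤ ‖O‖_F². -/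

import Mathlib

open scoped Kronecker
open Matrix
open scoped ComplexOrder

noncomputable section

abbrev QMat := Matrix (Fin 2) (Fin 2) ℂ

abbrev NMat (n : ℕ) := Matrix (Fin n → Fin 2) (Fin n → Fin 2) ℂ

/-- The four single-qubit Pauli matrices `I, X, Y, Z`. -/
def pauli : Fin 4 → QMat :=
  ![1, !![0, 1; 1, 0], !![0, -Complex.I; Complex.I, 0], !![1, 0; 0, -1]]

/-- The non-identity Paulis `X, Y, Z`. -/
def pauliXYZ (i : Fin 3) : QMat := pauli i.succ

/-- The `n`-qubit Pauli string indexed by `s : Fin n → Fin 4`. -/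
def pauliString {n : ℕ} (s : Fin n → Fin 4) : NMat n :=
  Matrix.of fun i j => ∏ k, pauli (s k) (i k) (j k)

/-- Support of a Pauli string. -/
def psupp {n : ℕ} (s : Fin n → Fin 4) : Finset (Fin n) :=
  Finset.univ.filter fun k => s k ≠ 0

/-- The observable with real Pauli coefficients `a`. -/
def obsOf {n : ℕ} (a : (Fin n → Fin 4) → ℝ) : NMat n :=
  ∑ s : Fin n → Fin 4, (a s : ℂ) • pauliString s

/-- Normalized Frobenius norm squared, `‖M‖_F² = Tr[Mᴴ M]/dim`. -/
def frobSq {m : Type*} [Fintype m] (M : Matrix m m ℂ) : ℝ :=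
  (Matrix.trace (Mᴴ * M)).re / (Fintype.card m : ℝ)

def IsUnitary {m : Type*} [Fintype m] [DecidableEq m] (U : Matrix m m ℂ) : Prop :=
  U * Uᴴ = 1 ∧ Uᴴ * U = 1

/-- Hilbert–Schmidt adjoint of a (linear) map on matrices:
`Φ†(A) i j = conj (Tr[Aᴴ Φ(E_{ij})])`. -/
def hsAdj {m : Type*} [Fintype m] [DecidableEq m]
    (Φ : Matrix m m ℂ → Matrix m m ℂ) (A : Matrix m m ℂ) : Matrix m m ℂ :=
  Matrix.of fun i j => (starRingEnd ℂ) (Matrix.trace (Aᴴ * Φ (Matrix.single i j 1)))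

/-- Pauli transfer matrix entry of a single-qubit map. -/
def ptm (Φ : QMat → QMat) (a b : Fin 4) : ℂ :=
  Matrix.trace (pauli a * Φ (pauli b)) / 2

/-- Tensor product `Φ 0 ⊗ Φ 1 ⊗ ⋯ ⊗ Φ (n-1)` of single-qubit (linear) maps,
defined via the Pauli transfer matrices. -/
def tensorMap {n : ℕ} (Φ : Fin n → QMat → QMat) (M : NMat n) : NMat n :=
  ∑ s : Fin n → Fin 4, ∑ t : Fin n → Fin 4,
    ((∏ k, ptm (Φ k) (s k) (t k)) * (Matrix.trace (pauliString t * M) / ((2 : ℂ) ^ n))) •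
      pauliString s

/-- `n`-fold tensor power `Φ^{⊗n}` of a single-qubit (linear) map. -/
def tensorPow (n : ℕ) (Φ : QMat → QMat) : NMat n → NMat n :=
  tensorMap fun _ => Φ

/-- Tensor product of `n` single-qubit matrices. -/
def qprod {n : ℕ} (V : Fin n → QMat) : NMat n :=
  Matrix.of fun i j => ∏ k, V k (i k) (j k)

/-- The single-qubit normal-form map `N'` with parameters `(D, t)`:
`N'(I) = I + Σ t_i σ_i` and `N'(σ_i) = D_i σ_i`. -/
def normalForm (D t : Fin 3 → ℝ) (M : QMat) : QMat :=
  (Matrix.trace M / 2) • (1 + ∑ i, (t i : ℂ) • pauliXYZ i) +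
    ∑ i, ((D i : ℂ) * (Matrix.trace (pauliXYZ i * M) / 2)) • pauliXYZ i

/-- `Υ(D,t) = max_{‖a‖₂=1} Σ_i a_i² D_i² + (Σ_i a_i t_i)²`. -/
def Upsilon (D t : Fin 3 → ℝ) : ℝ :=
  sSup { r : ℝ | ∃ a : Fin 3 → ℝ, (∑ i, a i ^ 2) = 1 ∧
    r = (∑ i, a i ^ 2 * D i ^ 2) + (∑ i, a i * t i) ^ 2 }

/-- Choi matrix of a single-qubit map. -/
def choi (Φ : QMat → QMat) : Matrix (Fin 2 × Fin 2) (Fin 2 × Fin 2) ℂ :=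
  Matrix.of fun p q => Φ (Matrix.single p.1 q.1 1) p.2 q.2

/-- A single-qubit quantum channel: linear, trace preserving, completely positive. -/
structure IsChannel (Φ : QMat → QMat) : Prop where
  linear : IsLinearMap ℂ Φ
  tracePreserving : ∀ M, Matrix.trace (Φ M) = Matrix.trace M
  completelyPositive : (choi Φ).PosSemidef

/-- Unitary 1-design (finitely supported distribution). -/
def IsOneDesign {ι : Type*} [Fintype ι] (w : ι → ℝ) (W : ι → QMat) : Prop :=
  ∀ M : QMat, ∑ i, (w i : ℂ) • (W i * M * (W i)ᴴ) = (Matrix.trace M / 2) • (1 : QMat)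

/-- The swap (flip) operator on two qubits. -/
def swapOp : Matrix (Fin 2 × Fin 2) (Fin 2 × Fin 2) ℂ :=
  Matrix.of fun p q => if p.1 = q.2 ∧ p.2 = q.1 then 1 else 0

/-- Unitary 2-design: the twirl of any `M` matches the Haar value
`c_I • 1 + c_F • F` (closed form of the Haar average on `U(2)`). -/
def IsTwoDesign {ι : Type*} [Fintype ι] (w : ι → ℝ) (W : ι → QMat) : Prop :=
  ∀ M : Matrix (Fin 2 × Fin 2) (Fin 2 × Fin 2) ℂ,
    ∑ i, (w i : ℂ) • ((W i ⊗ₖ W i) * M * (W i ⊗ₖ W i)ᴴ) =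
      ((Matrix.trace M - Matrix.trace (swapOp * M) / 2) / 3) •
          (1 : Matrix (Fin 2 × Fin 2) (Fin 2 × Fin 2) ℂ) +
        ((Matrix.trace (swapOp * M) - Matrix.trace M / 2) / 3) • swapOp

/-- `η`-approximate scrambler (finitely supported distribution over `U(2)`). -/
def IsApproxScrambler {ι : Type*} [Fintype ι] (η : ℝ) (w : ι → ℝ) (U : ι → QMat) : Prop :=
  (∀ a b : Fin 4, a ≠ b →
      ∑ i, (w i : ℂ) • (((U i)ᴴ * pauli a * U i) ⊗ₖ ((U i)ᴴ * pauli b * U i)) = 0) ∧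
    ∀ a b : Fin 3,
      ∑ i, w i * ((Matrix.trace (pauliXYZ a * U i * pauliXYZ b * (U i)ᴴ)).re / 2) ^ 2 ≤
        (1 + 2 * η) / 3

/-- Locally unbiased distribution over linear maps on `n`-qubit matrices. -/
def LocallyUnbiased (n : ℕ) {ι : Type*} [Fintype ι] (w : ι → ℝ)
    (C : ι → NMat n → NMat n) : Prop :=
  ∃ (m : ℕ) (v : Fin n → Fin m → ℝ) (W : Fin n → Fin m → QMat),
    (∀ j k, 0 ≤ v j k) ∧ (∀ j, ∑ k, v j k = 1) ∧ (∀ j k, IsUnitary (W j k)) ∧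
      (∀ j, IsOneDesign (v j) (W j)) ∧
      ∀ A B : NMat n,
        ∑ i, (w i : ℂ) • (C i A ⊗ₖ C i B) =
          ∑ i, ∑ f : Fin n → Fin m,
            ((w i * ∏ j, v j (f j) : ℝ) : ℂ) •
              (C i (qprod (fun j => W j (f j)) * A * (qprod fun j => W j (f j))ᴴ) ⊗ₖ
                C i (qprod (fun j => W j (f j)) * B * (qprod fun j => W j (f j))ᴴ))

/-- Pauli-invariant distribution over linear maps on `n`-qubit matrices. -/
def PauliInvariant (n : ℕ) {ι : Type*} [Fintype ι] (w : ι → ℝ)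
    (C : ι → NMat n → NMat n) : Prop :=
  ∀ A B : NMat n,
    ∑ i, (w i : ℂ) • (C i A ⊗ₖ C i B) =
      ((4 : ℂ) ^ n)⁻¹ • ∑ r : Fin n → Fin 4, ∑ i, (w i : ℂ) •
        (C i (pauliString r * A * pauliString r) ⊗ₖ C i (pauliString r * B * pauliString r))

/-- Fourier coefficient `Φ_γ(C) = Π_j 2^{-n} Tr[P_j C_j(P_{j-1})]` of a Pauli path. -/
def pathCoeff {n L : ℕ} (Cs : Fin L → NMat n → NMat n)
    (γ : Fin (L + 1) → Fin n → Fin 4) : ℂ :=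
  ∏ j : Fin L,
    (Matrix.trace (pauliString (γ j.succ) * Cs j (pauliString (γ j.castSucc))) / ((2 : ℂ) ^ n))

/-- Path weight `|γ| = Σ_{j=1}^L |P_j|`. -/
def pathWeight {n L : ℕ} (γ : Fin (L + 1) → Fin n → Fin 4) : ℕ :=
  ∑ j : Fin L, (psupp (γ j.succ)).card

/-- The (non-physical) map `Ñ_p` with `Ñ_p(I) = (N(I) - pI)/(1-p)` and
`Ñ_p(σ) = N(σ)/(1-p)` for `σ ∈ {X,Y,Z}`. -/
def tildeMap (N : QMat → QMat) (p : ℝ) (M : QMat) : QMat :=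
  (Matrix.trace M / 2) • (((1 : ℂ) - (p : ℂ))⁻¹ • (N 1 - (p : ℂ) • (1 : QMat))) +
    ∑ i : Fin 3, (Matrix.trace (pauliXYZ i * M) / 2) • (((1 : ℂ) - (p : ℂ))⁻¹ • N (pauliXYZ i))

/-- The layers of an `L`-layered noisy circuit: `C_j(ρ) = N^{⊗n}(U_j ρ U_j†)` for `j < L`,
and the last layer is followed by the single-qubit layer `V`. -/
def layerMaps {n L : ℕ} (Nm : QMat → QMat) (U : Fin L → NMat n) (Vt : NMat n)
    (j : Fin L) (ρ : NMat n) : NMat n :=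
  if j.val = L - 1 then Vt * tensorPow n Nm (U j * ρ * (U j)ᴴ) * Vtᴴ
  else tensorPow n Nm (U j * ρ * (U j)ᴴ)

/-- Composition `C_L ∘ ⋯ ∘ C_1` of the layers. -/
def circuitOf {n L : ℕ} (lm : Fin L → NMat n → NMat n) (ρ : NMat n) : NMat n :=
  (List.finRange L).foldl (fun σ j => lm j σ) ρ

/-- Operator (spectral) norm of a matrix, as the `ℓ²→ℓ²` operator norm. -/
def specNorm {m : Type*} [Fintype m] (M : Matrix m m ℂ) : ℝ :=
  Real.sqrt (sSup { r : ℝ | ∃ v : m → ℂ,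
    (∑ x, Complex.normSq (v x)) = 1 ∧ r = ∑ x, Complex.normSq (M.mulVec v x) })

/-- The positive semidefinite square root, as `Matrix.PosSemidef.sqrt` was defined in
Mathlib (Dec 2024); that definition has since been removed. -/
def psdSqrt {m : Type*} [Fintype m] [DecidableEq m] {A : Matrix m m ℂ} (hA : A.PosSemidef) :
    Matrix m m ℂ :=
  hA.1.eigenvectorUnitary.1 * Matrix.diagonal ((↑) ∘ (√·) ∘ hA.1.eigenvalues) *
    (star hA.1.eigenvectorUnitary : Matrix m m ℂ)

/-- Trace norm `‖M‖₁ = Tr √(Mᴴ M)` (sum of singular values). -/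
def traceNorm {m : Type*} [Fintype m] [DecidableEq m] (M : Matrix m m ℂ) : ℝ :=
  (Matrix.trace (psdSqrt (Matrix.posSemidef_conjTranspose_mul_self M))).re

/-!
In the Pauli basis, `Ñ_p† = tAdj` fixes `I` and multiplies `N†` by `1/χ` on `X, Y, Z`, so the
transfer matrix of `tAdj^{⊗n}` is that of `N†^{⊗n}` with the column of each Pauli string `t`
scaled by `χ^{-|t|}`. Split `O = ∑_A O_A` by exact support. A product of single-qubit unitaries
preserves exact supports, and averaging over a local 1-design makes Pauli coefficients of
different supports uncorrelated, so the averaged squared norm splits as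
`∑_A χ^{-2|A|} E ‖N†^{⊗n}(V† O_A V)‖_F²`. Each term is at most `‖O_A‖_F²` by hypothesis (for
`A = ∅` with equality, as `N†` is unital), and `∑_A ‖O_A‖_F² = ‖O‖_F²`.
-/

@[simp] lemma pauli_zero : pauli 0 = 1 := rfl

lemma conjTranspose_pauli (a : Fin 4) : (pauli a)ᴴ = pauli a := by
  fin_cases a <;> ext i j <;> fin_cases i <;> fin_cases j <;>
    simp [pauli, Matrix.conjTranspose_apply]

lemma trace_pauli (a : Fin 4) : trace (pauli a) = if a = 0 then 2 else 0 := by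
  fin_cases a <;> simp [pauli, Matrix.trace, Fin.sum_univ_two]

lemma trace_pauli_mul (a b : Fin 4) : trace (pauli a * pauli b) = if a = b then 2 else 0 := by
  fin_cases a <;> fin_cases b <;>
    simp [pauli, Matrix.trace, Fin.sum_univ_two, Complex.ext_iff] <;> norm_num

lemma qprod_mul {n : ℕ} (F G : Fin n → QMat) :
    qprod F * qprod G = qprod fun k => F k * G k := by
  ext i j
  simp only [qprod, Matrix.mul_apply, Matrix.of_apply, ← Finset.prod_mul_distrib]
  exact (Fintype.prod_sum fun k x => F k (i k) x * G k x (j k)).symm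

lemma trace_qprod {n : ℕ} (F : Fin n → QMat) : trace (qprod F) = ∏ k, trace (F k) := by
  simp only [Matrix.trace, Matrix.diag, qprod, Matrix.of_apply]
  exact (Fintype.prod_sum fun k x => F k x x).symm

lemma conjTranspose_qprod {n : ℕ} (F : Fin n → QMat) : (qprod F)ᴴ = qprod fun k => (F k)ᴴ := by
  ext i j
  simp [qprod, Matrix.conjTranspose_apply]

lemma qprod_one {n : ℕ} : qprod (fun _ : Fin n => (1 : QMat)) = 1 := by
  ext i j
  simp only [qprod, Matrix.of_apply, Matrix.one_apply]
  split_ifs with h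
  · simp [h]
  · obtain ⟨k, hk⟩ := Function.ne_iff.mp h
    exact Finset.prod_eq_zero (Finset.mem_univ k) (if_neg hk)

lemma qprod_conjTranspose_mul_self {n : ℕ} {V : Fin n → QMat} (hV : ∀ k, IsUnitary (V k)) :
    (qprod V)ᴴ * qprod V = 1 := by
  simp [conjTranspose_qprod, qprod_mul, (hV _).2, qprod_one]

lemma pauliString_eq_qprod {n : ℕ} (s : Fin n → Fin 4) :
    pauliString s = qprod fun k => pauli (s k) := rfl

lemma pauliString_zero {n : ℕ} : pauliString (fun _ : Fin n => 0) = 1 := by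
  simp [pauliString_eq_qprod, qprod_one]

lemma conjTranspose_pauliString {n : ℕ} (s : Fin n → Fin 4) :
    (pauliString s)ᴴ = pauliString s := by
  simp [pauliString_eq_qprod, conjTranspose_qprod, conjTranspose_pauli]

lemma trace_pauliString_mul {n : ℕ} (s t : Fin n → Fin 4) :
    trace (pauliString s * pauliString t) = if s = t then 2 ^ n else 0 := by
  rw [pauliString_eq_qprod, pauliString_eq_qprod, qprod_mul, trace_qprod]
  split_ifs with h
  · simp [h, trace_pauli_mul]
  · obtain ⟨k, hk⟩ := Function.ne_iff.mp h
    exact Finset.prod_eq_zero (Finset.mem_univ k) (by rw [trace_pauli_mul, if_neg hk])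

lemma psupp_eq_empty_iff {n : ℕ} (t : Fin n → Fin 4) : psupp t = ∅ ↔ t = fun _ => 0 := by
  simp [psupp, Finset.filter_eq_empty_iff, funext_iff]

lemma exists_eq_zero_ne_zero_of_psupp_ne {n : ℕ} {s t : Fin n → Fin 4} (h : psupp s ≠ psupp t) :
    ∃ k, (s k = 0 ∧ t k ≠ 0) ∨ (s k ≠ 0 ∧ t k = 0) := by
  contrapose! h
  ext k
  simp only [psupp, Finset.mem_filter, Finset.mem_univ, true_and]
  obtain ⟨h1, h2⟩ := h k
  tauto

def pauliCoeff {n : ℕ} (t : Fin n → Fin 4) (M : NMat n) : ℂ :=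
  trace (pauliString t * M) / 2 ^ n

lemma pauliCoeff_sum_smul {n : ℕ} (c : (Fin n → Fin 4) → ℂ) (t : Fin n → Fin 4) :
    pauliCoeff t (∑ s, c s • pauliString s) = c t := by
  simp [pauliCoeff, Matrix.mul_sum, Matrix.trace_sum, trace_pauliString_mul]

lemma pauliCoeff_smul_one {n : ℕ} (c : ℂ) (t : Fin n → Fin 4) :
    pauliCoeff t (c • (1 : NMat n)) = if t = (fun _ => 0) then c else 0 := by
  have := pauliCoeff_sum_smul (fun s => if s = (fun _ => 0) then c else 0) t
  simpa [ite_smul, pauliString_zero] using this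

lemma star_pauliCoeff {n : ℕ} (t : Fin n → Fin 4) {M : NMat n} (hM : M.IsHermitian) :
    star (pauliCoeff t M) = pauliCoeff t M := by
  rw [pauliCoeff, star_div₀, ← Matrix.trace_conjTranspose, Matrix.conjTranspose_mul,
    conjTranspose_pauliString, hM.eq, Matrix.trace_mul_comm]
  simp

lemma frobSq_sum_smul {n : ℕ} (c : (Fin n → Fin 4) → ℂ) :
    frobSq (∑ s, c s • pauliString s) = ∑ s, Complex.normSq (c s) := by
  set X := ∑ s, c s • pauliString s
  have hcoeff s : trace (pauliString s * X) = 2 ^ n * c s := by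
    rw [← pauliCoeff_sum_smul c s, pauliCoeff, mul_div_cancel₀ _ (by positivity)]
  have hadj : Xᴴ = ∑ s, star (c s) • pauliString s := by
    simp [X, Matrix.conjTranspose_sum, Matrix.conjTranspose_smul, conjTranspose_pauliString]
  have htrace : trace (Xᴴ * X) = ((2 ^ n * ∑ s, Complex.normSq (c s) : ℝ) : ℂ) := by
    simp only [hadj, Matrix.sum_mul, Matrix.smul_mul, Matrix.trace_sum, Matrix.trace_smul, hcoeff,
      smul_eq_mul, Complex.ofReal_mul, Complex.ofReal_pow, Complex.ofReal_ofNat,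
      Complex.ofReal_sum, Complex.normSq_eq_conj_mul_self, Finset.mul_sum]
    exact Finset.sum_congr rfl fun s _ => by simp only [Complex.star_def]; ring
  rw [frobSq, htrace, Complex.ofReal_re, show (Fintype.card (Fin n → Fin 2) : ℝ) = 2 ^ n by simp,
    mul_div_cancel_left₀ _ (by positivity)]

lemma frobSq_obsOf {n : ℕ} (b : (Fin n → Fin 4) → ℝ) : frobSq (obsOf b) = ∑ s, b s ^ 2 := by
  rw [obsOf, frobSq_sum_smul]
  simp [sq]

lemma isHermitian_obsOf {n : ℕ} (b : (Fin n → Fin 4) → ℝ) : (obsOf b).IsHermitian := by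
  simp [obsOf, Matrix.IsHermitian, Matrix.conjTranspose_sum, Matrix.conjTranspose_smul,
    conjTranspose_pauliString]

lemma tensorMap_eq_sum {n : ℕ} (Φ : Fin n → QMat → QMat) (M : NMat n) :
    tensorMap Φ M
      = ∑ s, (∑ t, (∏ k, ptm (Φ k) (s k) (t k)) * pauliCoeff t M) • pauliString s := by
  simp only [tensorMap, pauliCoeff, Finset.sum_smul]

lemma frobSq_tensorMap {n : ℕ} (Φ : Fin n → QMat → QMat) (M : NMat n) :
    frobSq (tensorMap Φ M)
      = ∑ s : Fin n → Fin 4,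
          Complex.normSq (∑ t, (∏ k, ptm (Φ k) (s k) (t k)) * pauliCoeff t M) := by
  rw [tensorMap_eq_sum, frobSq_sum_smul]

/-- `obsOf (restrictSupp A a)` is the paper's `O_A`: the part of `O = obsOf a` supported exactly
on `A`. -/
def restrictSupp {n : ℕ} (A : Finset (Fin n)) (a : (Fin n → Fin 4) → ℝ) (s : Fin n → Fin 4) : ℝ :=
  if psupp s = A then a s else 0

lemma pauliCoeff_conj_obsOf {n : ℕ} (V : NMat n) (c : (Fin n → Fin 4) → ℝ) (t : Fin n → Fin 4) :
    pauliCoeff t (Vᴴ * obsOf c * V) = ∑ s, c s * pauliCoeff t (Vᴴ * pauliString s * V) := by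
  simp only [pauliCoeff, obsOf, Matrix.mul_sum, Matrix.sum_mul, Matrix.mul_smul, Matrix.smul_mul,
    Matrix.trace_sum, Matrix.trace_smul, smul_eq_mul, Finset.sum_div, mul_div_assoc]

lemma pauliCoeff_conj_qprod {n : ℕ} (V : Fin n → QMat) (s t : Fin n → Fin 4) :
    pauliCoeff t ((qprod V)ᴴ * pauliString s * qprod V)
      = (∏ k, trace (pauli (t k) * ((V k)ᴴ * pauli (s k) * V k))) / 2 ^ n := by
  rw [pauliCoeff, pauliString_eq_qprod, pauliString_eq_qprod, conjTranspose_qprod, qprod_mul,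
    qprod_mul, qprod_mul, trace_qprod]

/-- Conjugation by a product of unitaries maps identity factors to identity factors and
traceless factors to traceless ones, so it preserves the support of a Pauli string. -/
lemma pauliCoeff_conj_qprod_eq_zero {n : ℕ} {V : Fin n → QMat} (hV : ∀ k, IsUnitary (V k))
    {s t : Fin n → Fin 4} (h : psupp s ≠ psupp t) :
    pauliCoeff t ((qprod V)ᴴ * pauliString s * qprod V) = 0 := by
  rw [pauliCoeff_conj_qprod, div_eq_zero_iff]
  left
  obtain ⟨k, hk⟩ := exists_eq_zero_ne_zero_of_psupp_ne h
  refine Finset.prod_eq_zero (Finset.mem_univ k) ?_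
  rcases hk with ⟨hs, ht⟩ | ⟨hs, ht⟩
  · rw [hs, pauli_zero, Matrix.mul_one, (hV k).2, Matrix.mul_one, trace_pauli, if_neg ht]
  · rw [ht, pauli_zero, Matrix.one_mul, Matrix.trace_mul_comm, ← Matrix.mul_assoc, (hV k).1,
      Matrix.one_mul, trace_pauli, if_neg hs]

lemma pauliCoeff_conj_restrictSupp {n : ℕ} {V : Fin n → QMat} (hV : ∀ k, IsUnitary (V k))
    (a : (Fin n → Fin 4) → ℝ) (A : Finset (Fin n)) (t : Fin n → Fin 4) :
    pauliCoeff t ((qprod V)ᴴ * obsOf (restrictSupp A a) * qprod V)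
      = if psupp t = A then pauliCoeff t ((qprod V)ᴴ * obsOf a * qprod V) else 0 := by
  rw [pauliCoeff_conj_obsOf, pauliCoeff_conj_obsOf]
  split_ifs with ht
  · refine Finset.sum_congr rfl fun s _ => ?_
    by_cases hs : psupp s = A
    · rw [restrictSupp, if_pos hs]
    · rw [pauliCoeff_conj_qprod_eq_zero hV (ht ▸ hs), mul_zero, mul_zero]
  · refine Finset.sum_eq_zero fun s _ => ?_
    by_cases hs : psupp s = A
    · rw [pauliCoeff_conj_qprod_eq_zero hV (hs ▸ Ne.symm ht), mul_zero]
    · rw [restrictSupp, if_neg hs, Complex.ofReal_zero, zero_mul]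

lemma trace_mul_mul_trace_mul {m : Type*} [Fintype m] (A B O O' : Matrix m m ℂ) :
    trace (A * O) * trace (B * O')
      = ∑ i, ∑ i', ∑ j, ∑ j', (A i j * B i' j') * (O j i * O' j' i') := by
  simp only [Matrix.trace, Matrix.diag, Matrix.mul_apply, Finset.sum_mul_sum]
  exact Finset.sum_congr rfl fun i _ => Finset.sum_congr rfl fun j _ =>
    Finset.sum_congr rfl fun i' _ => Finset.sum_congr rfl fun j' _ => by ring

/-- Averaging over independent single-qubit factors factorizes entrywise, so a single
qubit whose averaged pair of factors vanishes kills the whole average. -/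
lemma sum_pi_trace_qprod_mul_mul_eq_zero {n : ℕ} {ι : Type*} [Fintype ι] (u : ι → ℂ)
    (F G : Fin n → ι → QMat) (O O' : NMat n) (k₀ : Fin n)
    (h₀ : ∀ x y x' y', ∑ m, u m * (F k₀ m x y * G k₀ m x' y') = 0) :
    ∑ f : Fin n → ι, (∏ k, u (f k)) *
      (trace (qprod (fun k => F k (f k)) * O) * trace (qprod (fun k => G k (f k)) * O')) = 0 := by
  simp only [trace_mul_mul_trace_mul, Finset.mul_sum]
  rw [Finset.sum_comm]
  refine Finset.sum_eq_zero fun i _ => ?_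
  rw [Finset.sum_comm]
  refine Finset.sum_eq_zero fun i' _ => ?_
  rw [Finset.sum_comm]
  refine Finset.sum_eq_zero fun j _ => ?_
  rw [Finset.sum_comm]
  refine Finset.sum_eq_zero fun j' _ => ?_
  have hfactor : ∑ f : Fin n → ι, (∏ k, u (f k)) *
      qprod (fun k => F k (f k)) i j * qprod (fun k => G k (f k)) i' j'
      = ∏ k, ∑ m, u m * (F k m (i k) (j k) * G k m (i' k) (j' k)) := by
    rw [Fintype.prod_sum]
    simp only [qprod, Matrix.of_apply, Finset.prod_mul_distrib, mul_assoc]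
  simp only [← mul_assoc, ← Finset.sum_mul]
  rw [hfactor, Finset.prod_eq_zero (Finset.mem_univ k₀) (h₀ _ _ _ _), zero_mul, zero_mul]

lemma sum_conj_pauli_entry_mul_eq_zero {ι : Type*} [Fintype ι] {w : ι → ℝ} {W : ι → QMat}
    (hWu : ∀ i, IsUnitary (W i)) (hdes : IsOneDesign w W) {a b : Fin 4}
    (hab : (a = 0 ∧ b ≠ 0) ∨ (a ≠ 0 ∧ b = 0)) (x y x' y' : Fin 2) :
    ∑ m, (w m : ℂ) * ((W m * pauli a * (W m)ᴴ) x y * (W m * pauli b * (W m)ᴴ) x' y') = 0 := by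
  have htwirl {c : Fin 4} (hc : c ≠ 0) (x y : Fin 2) :
      ∑ m, (w m : ℂ) * (W m * pauli c * (W m)ᴴ) x y = 0 := by
    simpa [Matrix.sum_apply, trace_pauli, hc] using congrFun (congrFun (hdes (pauli c)) x) y
  rcases hab with ⟨rfl, hb⟩ | ⟨ha, rfl⟩
  · simp only [pauli_zero, Matrix.mul_one, (hWu _).1, mul_left_comm _ ((1 : QMat) x y),
      ← Finset.mul_sum, htwirl hb, mul_zero]
  · simp only [pauli_zero, Matrix.mul_one, (hWu _).1, ← mul_assoc, ← Finset.sum_mul, htwirl ha,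
      zero_mul]

lemma sum_pi_pauliCoeff_conj_mul_eq_zero {n : ℕ} {ι : Type*} [Fintype ι] {w : ι → ℝ}
    {W : ι → QMat} (hWu : ∀ i, IsUnitary (W i)) (hdes : IsOneDesign w W) (O : NMat n)
    {t t' : Fin n → Fin 4} (h : psupp t ≠ psupp t') :
    ∑ f : Fin n → ι, (∏ k, (w (f k) : ℂ)) *
      (pauliCoeff t ((qprod fun k => W (f k))ᴴ * O * qprod fun k => W (f k)) *
        pauliCoeff t' ((qprod fun k => W (f k))ᴴ * O * qprod fun k => W (f k))) = 0 := by
  have hcoeff (V : Fin n → QMat) (t : Fin n → Fin 4) : pauliCoeff t ((qprod V)ᴴ * O * qprod V)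
      = (2 ^ n)⁻¹ * trace (qprod (fun k => V k * pauli (t k) * (V k)ᴴ) * O) := by
    rw [pauliCoeff, div_eq_inv_mul, ← Matrix.mul_assoc, Matrix.trace_mul_comm, ← Matrix.mul_assoc,
      ← Matrix.mul_assoc, pauliString_eq_qprod, conjTranspose_qprod, qprod_mul, qprod_mul]
  obtain ⟨k₀, hk₀⟩ := exists_eq_zero_ne_zero_of_psupp_ne h
  calc _ = ((2 ^ n)⁻¹ * (2 ^ n)⁻¹) * ∑ f : Fin n → ι, (∏ k, (w (f k) : ℂ)) *
        (trace (qprod (fun k => W (f k) * pauli (t k) * (W (f k))ᴴ) * O) *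
          trace (qprod (fun k => W (f k) * pauli (t' k) * (W (f k))ᴴ) * O)) := by
        simp only [hcoeff, Finset.mul_sum]
        exact Finset.sum_congr rfl fun f _ => by ring
    _ = 0 := by
        rw [sum_pi_trace_qprod_mul_mul_eq_zero (fun m => (w m : ℂ))
          (fun k m => W m * pauli (t k) * (W m)ᴴ) (fun k m => W m * pauli (t' k) * (W m)ᴴ) O O k₀
          (sum_conj_pauli_entry_mul_eq_zero hWu hdes hk₀), mul_zero]

lemma hsAdj_one {N : QMat → QMat} (hN : ∀ M, trace (N M) = trace M) : hsAdj N 1 = 1 := by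
  ext i j
  simp only [hsAdj, Matrix.of_apply, Matrix.conjTranspose_one, Matrix.one_mul, hN]
  by_cases h : i = j
  · simp [h, Matrix.trace_single_eq_same, Matrix.one_apply]
  · simp [h, Matrix.trace_single_eq_of_ne i j _ h]

lemma ptm_zero_right_of_map_one {Φ : QMat → QMat} (hΦ : Φ 1 = 1) (a : Fin 4) :
    ptm Φ a 0 = if a = 0 then 1 else 0 := by
  rw [ptm, pauli_zero, hΦ, Matrix.mul_one, trace_pauli]
  split_ifs <;> norm_num

section Rescaled

variable {Φ Ψ : QMat → QMat} {c : ℂ}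

lemma apply_pauli_of_rescaled (hΦ : Φ 1 = 1)
    (hΨ : ∀ M, Ψ M = (trace M / 2) • (1 : QMat) +
      ∑ i : Fin 3, (trace (pauliXYZ i * M) / 2) • (c • Φ (pauliXYZ i)))
    (b : Fin 4) :
    Ψ (pauli b) = (if b = 0 then 1 else c) • Φ (pauli b) := by
  have htrace (i : Fin 3) (b : Fin 4) :
      trace (pauliXYZ i * pauli b) / 2 = if i.succ = b then 1 else 0 := by
    rw [pauliXYZ, trace_pauli_mul]
    split_ifs <;> norm_num
  rw [hΨ, trace_pauli]
  simp only [htrace, ite_smul, one_smul, zero_smul]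
  induction b using Fin.cases with
  | zero => simp [Fin.succ_ne_zero, hΦ]
  | succ j => simp [Fin.succ_inj, pauliXYZ]

lemma prod_ptm_of_rescaled (hΦ : Φ 1 = 1)
    (hΨ : ∀ M, Ψ M = (trace M / 2) • (1 : QMat) +
      ∑ i : Fin 3, (trace (pauliXYZ i * M) / 2) • (c • Φ (pauliXYZ i)))
    {n : ℕ} (s t : Fin n → Fin 4) :
    ∏ k, ptm Ψ (s k) (t k) = c ^ (psupp t).card * ∏ k, ptm Φ (s k) (t k) := by
  have hptm (a b : Fin 4) : ptm Ψ a b = (if b = 0 then 1 else c) * ptm Φ a b := by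
    rw [ptm, ptm, apply_pauli_of_rescaled hΦ hΨ, Matrix.mul_smul, Matrix.trace_smul, smul_eq_mul,
      mul_div_assoc]
  simp only [hptm, Finset.prod_mul_distrib, Finset.prod_ite, Finset.prod_const_one, one_mul,
    Finset.prod_const, psupp]

end Rescaled

lemma sum_mul_sum_normSq_sum_eq_of_orthogonal {F S α : Type*} [Fintype F] [Fintype S]
    [Fintype α] (u : F → ℝ) (y : F → α → S → ℂ)
    (horth : ∀ A B, A ≠ B → ∑ f, (u f : ℂ) * ∑ s, star (y f A s) * y f B s = 0) :
    ∑ f, u f * ∑ s, Complex.normSq (∑ A, y f A s)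
      = ∑ A, ∑ f, u f * ∑ s, Complex.normSq (y f A s) := by
  apply Complex.ofReal_injective
  simp only [Complex.ofReal_sum, Complex.ofReal_mul, Complex.normSq_eq_conj_mul_self,
    ← Complex.star_def]
  have hexpand : ∑ f, (u f : ℂ) * ∑ s, star (∑ A, y f A s) * ∑ A, y f A s
      = ∑ A, ∑ B, ∑ f, (u f : ℂ) * ∑ s, star (y f A s) * y f B s := by
    simp only [star_sum, Finset.sum_mul_sum]
    simp only [Finset.mul_sum]
    calc _ = ∑ f, ∑ A, ∑ B, ∑ s, (u f : ℂ) * (star (y f A s) * y f B s) := by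
          refine Finset.sum_congr rfl fun f _ => ?_
          rw [Finset.sum_comm]
          exact Finset.sum_congr rfl fun A _ => Finset.sum_comm
      _ = _ := by
          rw [Finset.sum_comm]
          exact Finset.sum_congr rfl fun A _ => Finset.sum_comm
  rw [hexpand]
  refine Finset.sum_congr rfl fun A _ => ?_
  rw [Finset.sum_eq_single A (fun B _ hBA => horth A B (Ne.symm hBA)) (by simp)]

lemma sum_mul_sum_normSq_eq_sum_blocks {F S τ α : Type*} [Fintype F] [Fintype S] [Fintype τ]
    [Fintype α] [DecidableEq α] (u : F → ℝ) (g : τ → α) (T : S → τ → ℂ) (x : F → τ → ℂ)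
    (horth : ∀ t t', g t ≠ g t' → ∑ f, (u f : ℂ) * (star (x f t) * x f t') = 0) :
    ∑ f, u f * ∑ s, Complex.normSq (∑ t, T s t * x f t)
      = ∑ A, ∑ f, u f * ∑ s, Complex.normSq (∑ t, T s t * if g t = A then x f t else 0) := by
  set y : F → α → S → ℂ := fun f A s => ∑ t, T s t * if g t = A then x f t else 0
  have hsplit f s : ∑ t, T s t * x f t = ∑ A, y f A s := by
    simp only [y, mul_ite, mul_zero]
    rw [Finset.sum_comm]
    simp
  simp only [hsplit]
  refine sum_mul_sum_normSq_sum_eq_of_orthogonal u y fun A B hAB => ?_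
  simp only [y, star_sum, star_mul']
  simp only [Finset.sum_mul_sum]
  simp only [Finset.mul_sum]
  rw [Finset.sum_comm]
  refine Finset.sum_eq_zero fun s _ => ?_
  rw [Finset.sum_comm]
  refine Finset.sum_eq_zero fun t _ => ?_
  rw [Finset.sum_comm]
  refine Finset.sum_eq_zero fun t' _ => ?_
  by_cases h : g t = A ∧ g t' = B
  · simp only [h, if_true]
    calc _ = star (T s t) * T s t' * ∑ f, (u f : ℂ) * (star (x f t) * x f t') := by
          rw [Finset.mul_sum]
          exact Finset.sum_congr rfl fun _ _ => by ring
      _ = 0 := by rw [horth t t' (h.1 ▸ h.2 ▸ hAB), mul_zero]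
  · rcases not_and_or.mp h with h | h <;> simp [h]

lemma frobSq_tensorPow {n : ℕ} (Φ : QMat → QMat) (M : NMat n) :
    frobSq (tensorPow n Φ M)
      = ∑ s : Fin n → Fin 4,
          Complex.normSq (∑ t, (∏ k, ptm Φ (s k) (t k)) * pauliCoeff t M) :=
  frobSq_tensorMap _ M

lemma normSq_sum_mul_ite_pow_card_pauliCoeff {n : ℕ} {V : Fin n → QMat}
    (hV : ∀ k, IsUnitary (V k)) (T : (Fin n → Fin 4) → ℂ) (l : ℝ) (A : Finset (Fin n))
    (a : (Fin n → Fin 4) → ℝ) :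
    Complex.normSq (∑ t, T t * if psupp t = A then
        (l : ℂ) ^ (psupp t).card * pauliCoeff t ((qprod V)ᴴ * obsOf a * qprod V) else 0)
      = l ^ (2 * A.card) * Complex.normSq
          (∑ t, T t * pauliCoeff t ((qprod V)ᴴ * obsOf (restrictSupp A a) * qprod V)) := by
  have hscale t : (if psupp t = A then
        (l : ℂ) ^ (psupp t).card * pauliCoeff t ((qprod V)ᴴ * obsOf a * qprod V) else 0)
      = (l : ℂ) ^ A.card * pauliCoeff t ((qprod V)ᴴ * obsOf (restrictSupp A a) * qprod V) := by
    rw [pauliCoeff_conj_restrictSupp hV]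
    split_ifs with ht <;> simp [ht]
  simp only [hscale, mul_left_comm _ ((l : ℂ) ^ A.card)]
  rw [← Finset.mul_sum, Complex.normSq_mul, ← Complex.ofReal_pow, Complex.normSq_ofReal,
    ← mul_pow, ← sq, ← pow_mul]

/-- The twirl makes the different supports orthogonal, and on support `A` the rescaling acts as
multiplication by `l ^ |A|`. -/
lemma sum_frobSq_tensorPow_rescaled_eq {n : ℕ} {ι : Type*} [Fintype ι] {w : ι → ℝ}
    {W : ι → QMat} (hWu : ∀ i, IsUnitary (W i)) (hdes : IsOneDesign w W)
    {Φ Ψ : QMat → QMat} (hΦ : Φ 1 = 1) (l : ℝ)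
    (hΨ : ∀ M, Ψ M = (trace M / 2) • (1 : QMat) +
      ∑ i : Fin 3, (trace (pauliXYZ i * M) / 2) • ((l : ℂ) • Φ (pauliXYZ i)))
    (a : (Fin n → Fin 4) → ℝ) :
    ∑ f : Fin n → ι, (∏ k, w (f k)) *
        frobSq (tensorPow n Ψ ((qprod fun k => W (f k))ᴴ * obsOf a * qprod fun k => W (f k)))
      = ∑ A : Finset (Fin n), l ^ (2 * A.card) * ∑ f : Fin n → ι, (∏ k, w (f k)) *
          frobSq (tensorPow n Φ
            ((qprod fun k => W (f k))ᴴ * obsOf (restrictSupp A a) * qprod fun k => W (f k))) := by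
  set c : (Fin n → ι) → (Fin n → Fin 4) → ℂ := fun f t =>
    pauliCoeff t ((qprod fun k => W (f k))ᴴ * obsOf a * qprod fun k => W (f k))
  have hc_star f t : star (c f t) = c f t :=
    star_pauliCoeff t (Matrix.isHermitian_conjTranspose_mul_mul _ (isHermitian_obsOf a))
  have horth t t' (h : psupp t ≠ psupp t') : ∑ f, ((∏ k, w (f k) : ℝ) : ℂ) *
      (star ((l : ℂ) ^ (psupp t).card * c f t) * ((l : ℂ) ^ (psupp t').card * c f t')) = 0 := by
    simp only [star_mul', hc_star, Complex.ofReal_prod]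
    calc _ = star ((l : ℂ) ^ (psupp t).card) * (l : ℂ) ^ (psupp t').card *
          ∑ f : Fin n → ι, (∏ k, (w (f k) : ℂ)) * (c f t * c f t') := by
          rw [Finset.mul_sum]
          exact Finset.sum_congr rfl fun f _ => by ring
      _ = 0 := by rw [sum_pi_pauliCoeff_conj_mul_eq_zero hWu hdes _ h, mul_zero]
  have hptm (M : NMat n) (s t : Fin n → Fin 4) : (∏ k, ptm Ψ (s k) (t k)) * pauliCoeff t M
      = (∏ k, ptm Φ (s k) (t k)) * ((l : ℂ) ^ (psupp t).card * pauliCoeff t M) := by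
    rw [prod_ptm_of_rescaled hΦ hΨ]
    ring
  simp only [frobSq_tensorPow, hptm]
  rw [sum_mul_sum_normSq_eq_sum_blocks _ psupp _ (fun f t => (l : ℂ) ^ (psupp t).card * c f t)
    horth]
  simp only [c, normSq_sum_mul_ite_pow_card_pauliCoeff (fun k => hWu _), Finset.mul_sum]
  exact Finset.sum_congr rfl fun A _ => Finset.sum_congr rfl fun f _ =>
    Finset.sum_congr rfl fun s _ => by ring

lemma tensorPow_smul_one {Φ : QMat → QMat} (hΦ : Φ 1 = 1) (n : ℕ) (c : ℂ) :
    tensorPow n Φ (c • (1 : NMat n)) = c • 1 := by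
  have hcoeff (s : Fin n → Fin 4) :
      ∑ t, (∏ k, ptm Φ (s k) (t k)) * pauliCoeff t (c • (1 : NMat n))
        = if s = (fun _ => 0) then c else 0 := by
    simp only [pauliCoeff_smul_one, mul_ite, mul_zero, Finset.sum_ite_eq', Finset.mem_univ,
      if_true, ptm_zero_right_of_map_one hΦ, Finset.prod_boole]
    simp [funext_iff]
  rw [tensorPow, tensorMap_eq_sum]
  simp [hcoeff, ite_smul, pauliString_zero]

lemma obsOf_restrictSupp_empty {n : ℕ} (a : (Fin n → Fin 4) → ℝ) :
    obsOf (restrictSupp ∅ a) = (a fun _ => 0 : ℂ) • 1 := by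
  rw [obsOf, Finset.sum_eq_single (fun _ => 0) (fun s _ hs => ?_) (by simp), restrictSupp,
    if_pos ((psupp_eq_empty_iff _).mpr rfl), pauliString_zero]
  rw [restrictSupp, if_neg (fun h => hs ((psupp_eq_empty_iff s).mp h)), Complex.ofReal_zero,
    zero_smul]

lemma sum_pi_prod_eq_one {n : ℕ} {ι : Type*} [Fintype ι] {w : ι → ℝ} (hw1 : ∑ i, w i = 1) :
    ∑ f : Fin n → ι, ∏ k, w (f k) = 1 := by
  rw [← Fintype.prod_sum fun (_ : Fin n) m => w m]
  simp [hw1]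

/-- On the identity component the twirl and the unital map act trivially. -/
lemma sum_frobSq_tensorPow_restrictSupp_empty {n : ℕ} {ι : Type*} [Fintype ι] {w : ι → ℝ}
    {W : ι → QMat} (hw1 : ∑ i, w i = 1) (hWu : ∀ i, IsUnitary (W i)) {Φ : QMat → QMat}
    (hΦ : Φ 1 = 1) (a : (Fin n → Fin 4) → ℝ) :
    ∑ f : Fin n → ι, (∏ k, w (f k)) * frobSq (tensorPow n Φ
        ((qprod fun k => W (f k))ᴴ * obsOf (restrictSupp ∅ a) * qprod fun k => W (f k)))
      = frobSq (obsOf (restrictSupp ∅ a)) := by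
  simp only [obsOf_restrictSupp_empty, Matrix.mul_smul, Matrix.mul_one, Matrix.smul_mul,
    qprod_conjTranspose_mul_self fun k => hWu _, tensorPow_smul_one hΦ, ← Finset.sum_mul,
    sum_pi_prod_eq_one hw1, one_mul]

lemma frobSq_obsOf_eq_sum_restrictSupp {n : ℕ} (a : (Fin n → Fin 4) → ℝ) :
    frobSq (obsOf a) = ∑ A : Finset (Fin n), frobSq (obsOf (restrictSupp A a)) := by
  simp only [frobSq_obsOf, restrictSupp, ite_pow, ne_eq, OfNat.ofNat_ne_zero, not_false_eq_true,
    zero_pow]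
  rw [Finset.sum_comm]
  simp

theorem stmt_7_general (n : ℕ) (N : QMat → QMat) (hN : IsChannel N)
    {ι : Type*} [Fintype ι] (w : ι → ℝ) (W : ι → QMat)
    (hw1 : ∑ i, w i = 1)
    (hWu : ∀ i, IsUnitary (W i)) (hdes : IsOneDesign w W)
    (χ : ℝ) (hχ0 : 0 < χ)
    (hcontr : ∀ A : Finset (Fin n), A.Nonempty → ∀ b : (Fin n → Fin 4) → ℝ,
      (∀ s, psupp s ≠ A → b s = 0) →
      ∑ f : Fin n → ι, (∏ k, w (f k)) *
          frobSq (tensorPow n (hsAdj N)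
            ((qprod fun k => W (f k))ᴴ * obsOf b * qprod fun k => W (f k))) ≤
        χ ^ (2 * A.card) * frobSq (obsOf b))
    (p : ℝ) (hp : p = 1 - χ)
    (tAdj : QMat → QMat)
    (htAdj : ∀ M, tAdj M = (Matrix.trace M / 2) • (1 : QMat) +
      ∑ i : Fin 3, (Matrix.trace (pauliXYZ i * M) / 2) •
        (((1 : ℂ) - (p : ℂ))⁻¹ • hsAdj N (pauliXYZ i)))
    (a : (Fin n → Fin 4) → ℝ) :
    ∑ f : Fin n → ι, (∏ k, w (f k)) *
        frobSq (tensorPow n tAdj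
          ((qprod fun k => W (f k))ᴴ * obsOf a * qprod fun k => W (f k))) ≤
      frobSq (obsOf a) := by
  have hunital := hsAdj_one hN.tracePreserving
  have hscale : ((1 : ℂ) - (p : ℂ))⁻¹ = ((χ⁻¹ : ℝ) : ℂ) := by
    rw [hp]
    push_cast
    ring
  rw [sum_frobSq_tensorPow_rescaled_eq hWu hdes hunital χ⁻¹ (by simpa only [hscale] using htAdj),
    frobSq_obsOf_eq_sum_restrictSupp]
  refine Finset.sum_le_sum fun A _ => ?_
  rcases A.eq_empty_or_nonempty with rfl | hA
  · rw [sum_frobSq_tensorPow_restrictSupp_empty hw1 hWu hunital, Finset.card_empty, pow_zero,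
      one_mul]
  · calc _ ≤ χ⁻¹ ^ (2 * A.card) * (χ ^ (2 * A.card) * frobSq (obsOf (restrictSupp A a))) :=
          mul_le_mul_of_nonneg_left (hcontr A hA _ fun s hs => if_neg hs) (by positivity)
      _ = frobSq (obsOf (restrictSupp A a)) := by
          rw [← mul_assoc, ← mul_pow, inv_mul_cancel₀ hχ0.ne', one_pow, one_mul]

/-- (The non-physical map `Ñ_p` does not increase the Frobenius norm on
average.) With `p = 1 - χ` and `Ñ_p†(I) = I`, `Ñ_p†(σ) = N†(σ)/(1-p)` for `σ ∈ {X,Y,Z}`: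
`E_{V ~ D_s^{⊗n}} ‖Ñ_p^{†⊗n}(Vᴴ O V)‖_F² ≤ ‖O‖_F²`. -/
theorem stmt_7 (n : ℕ) (N : QMat → QMat) (hN : IsChannel N)
    {ι : Type*} [Fintype ι] (w : ι → ℝ) (W : ι → QMat)
    (hw0 : ∀ i, 0 ≤ w i) (hw1 : ∑ i, w i = 1)
    (hWu : ∀ i, IsUnitary (W i)) (hdes : IsOneDesign w W)
    (χ : ℝ) (hχ0 : 0 < χ) (hχ1 : χ ≤ 1)
    (hcontr : ∀ A : Finset (Fin n), A.Nonempty → ∀ b : (Fin n → Fin 4) → ℝ,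
      (∀ s, psupp s ≠ A → b s = 0) →
      ∑ f : Fin n → ι, (∏ k, w (f k)) *
          frobSq (tensorPow n (hsAdj N)
            ((qprod fun k => W (f k))ᴴ * obsOf b * qprod fun k => W (f k))) ≤
        χ ^ (2 * A.card) * frobSq (obsOf b))
    (p : ℝ) (hp : p = 1 - χ)
    (tAdj : QMat → QMat)
    (htAdj : ∀ M, tAdj M = (Matrix.trace M / 2) • (1 : QMat) +
      ∑ i : Fin 3, (Matrix.trace (pauliXYZ i * M) / 2) •
        (((1 : ℂ) - (p : ℂ))⁻¹ • hsAdj N (pauliXYZ i)))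
    (a : (Fin n → Fin 4) → ℝ) :
    ∑ f : Fin n → ι, (∏ k, w (f k)) *
        frobSq (tensorPow n tAdj
          ((qprod fun k => W (f k))ᴴ * obsOf a * qprod fun k => W (f k))) ≤
      frobSq (obsOf a) :=
  stmt_7_general n N hN w W hw1 hWu hdes χ hχ0 hcontr p hp tAdj htAdj a

end
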